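/- Exactness identity for the FPF update (algebraic core of Theorem 2): Let π be a probability measure, h, f square-integrable functions, and suppose K·f satisfies π(K·f) = π((h − π(h)) f) for every f (Poisson-equation property), and u·f = −(1/2)(h − π(h))(K·f) − π(h)(K·f). Then π(u·f) + (1/2) π(K·(K·f)) + π(K·f) ż = (π(fh) − π(h)π(f))(ż − π(h)) for any scalar ż, provided additionally π(K·(K·f)) = π((h − π(h)) K·f). -/

import Mathlib

open MeasureTheory

/-
Both sides are affine in `zdot` with the same slope, because the Poisson equation tested
against `f` identifies `π(K f)` with the covariance `π(f h) - π(h) π(f)`. The constant terms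
agree because, by the choice of `u`, the integrand `(h - π(h)) K f` equals `-2 (u f + π(h) K f)`,
so the Poisson equation tested against `K f` turns `(1/2) π(K (K f))` into `-π(u f) - π(h) π(K f)`.
-/

theorem integral_sub_const_mul_eq {Ω : Type*} [MeasurableSpace Ω] {μ : Measure Ω}
    {h f : Ω → ℝ} (hf : Integrable f μ) (hfh : Integrable (fun x => f x * h x) μ) (c : ℝ) :
    ∫ x, (h x - c) * f x ∂μ = (∫ x, f x * h x ∂μ) - c * ∫ x, f x ∂μ := by
  simp_rw [sub_mul]
  rw [integral_sub (by simpa only [mul_comm] using hfh) (hf.const_mul c), integral_const_mul]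
  simp only [mul_comm]

theorem fpf_exactness_core_general {Ω : Type*} [MeasurableSpace Ω] (π : Measure Ω)
    (h f Kf KKf uf : Ω → ℝ)
    (hf : Integrable f π)
    (hfh : Integrable (fun x => f x * h x) π)
    (hKf : Integrable Kf π)
    (huf : Integrable uf π)
    (hPE : ∫ x, Kf x ∂π = ∫ x, (h x - ∫ y, h y ∂π) * f x ∂π)
    (hPE2 : ∫ x, KKf x ∂π = ∫ x, (h x - ∫ y, h y ∂π) * Kf x ∂π)
    (hu : ∀ x, uf x = -(1/2) * (h x - ∫ y, h y ∂π) * Kf x - (∫ y, h y ∂π) * Kf x)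
    (zdot : ℝ) :
    (∫ x, uf x ∂π) + (1/2) * (∫ x, KKf x ∂π) + (∫ x, Kf x ∂π) * zdot
      = ((∫ x, f x * h x ∂π) - (∫ x, h x ∂π) * (∫ x, f x ∂π)) * (zdot - ∫ x, h x ∂π) := by
  set m : ℝ := ∫ y, h y ∂π
  have hcov : ∫ x, Kf x ∂π = (∫ x, f x * h x ∂π) - m * ∫ x, f x ∂π :=
    hPE.trans (integral_sub_const_mul_eq hf hfh m)
  have hcontrol : ∫ x, (h x - m) * Kf x ∂π = -2 * ((∫ x, uf x ∂π) + m * ∫ x, Kf x ∂π) := by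
    have hpointwise : ∀ x, (h x - m) * Kf x = -2 * (uf x + m * Kf x) := fun x => by
      rw [hu x]; ring
    simp_rw [hpointwise]
    rw [integral_const_mul, integral_add huf (hKf.const_mul m), integral_const_mul]
  rw [hPE2, hcontrol, hcov]
  ring

theorem fpf_exactness_core {Ω : Type*} [MeasurableSpace Ω] (π : Measure Ω)
    [IsProbabilityMeasure π]
    (h f Kf KKf uf : Ω → ℝ)
    (hh : Integrable h π) (hf : Integrable f π)
    (hfh : Integrable (fun x => f x * h x) π)
    (hKf : Integrable Kf π) (hKKf : Integrable KKf π)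
    (huf : Integrable uf π)
    (hPE : ∫ x, Kf x ∂π = ∫ x, (h x - ∫ y, h y ∂π) * f x ∂π)
    (hPE2 : ∫ x, KKf x ∂π = ∫ x, (h x - ∫ y, h y ∂π) * Kf x ∂π)
    (hu : ∀ x, uf x = -(1/2) * (h x - ∫ y, h y ∂π) * Kf x - (∫ y, h y ∂π) * Kf x)
    (zdot : ℝ) :
    (∫ x, uf x ∂π) + (1/2) * (∫ x, KKf x ∂π) + (∫ x, Kf x ∂π) * zdot
      = ((∫ x, f x * h x ∂π) - (∫ x, h x ∂π) * (∫ x, f x ∂π)) * (zdot - ∫ x, h x ∂π) :=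
  fpf_exactness_core_general π h f Kf KKf uf hf hfh hKf huf hPE hPE2 hu zdot
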